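/- Let L be any finitary first-order language and φ an L-sentence. Then ¬θ(φ) is expressible by an L-theory iff it is expressible by a single L-sentence. That is: if there is an L-theory T such that for every nonempty L-structure A, A ⊨ T iff no nonempty substructure of A satisfies φ, then there is a single L-sentence ψ such that for every nonempty L-structure A, A ⊨ ψ iff no nonempty substructure of A satisfies φ (the converse being trivial). -/

import Mathlib

/-! If no finite part of `T` forced `¬θ(φ)`, each finite `s ⊆ T` would have a model `M s` with a
nonempty substructure `S s ⊨ φ`. By Łoś, an ultraproduct of the `M s` along an ultrafilter refining
`atTop` models `T`, and the ultraproduct of the `S s` satisfies `φ` and embeds into it: this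
contradicts `T` axiomatizing `¬θ(φ)`. So the conjunction of some finite part of `T` already works. -/

open FirstOrder Language

universe u v

namespace FirstOrder.Language.Ultraproduct

open Filter Structure

variable {α : Type*} {L : Language} {M N : α → Type*}
  [∀ a, L.Structure (M a)] [∀ a, L.Structure (N a)]

theorem exists_eq_cast {u : Ultrafilter α} {n : ℕ} (x : Fin n → (u : Filter α).Product M) :
    ∃ x' : Fin n → ∀ a, M a, x = fun i => (x' i : (u : Filter α).Product M) :=
  ⟨fun i => (x i).out, funext fun i => (Quotient.out_eq' (x i)).symm⟩

theorem relMap_cast {u : Ultrafilter α} {n : ℕ} (r : L.Relations n) (x : Fin n → ∀ a, M a) :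
    RelMap r (fun i => (x i : (u : Filter α).Product M)) ↔
      ∀ᶠ a in (u : Filter α), RelMap r fun i => x i a :=
  relMap_quotient_mk' _ r x

def map (u : Ultrafilter α) (g : ∀ a, M a → N a) :
    (u : Filter α).Product M → (u : Filter α).Product N :=
  Quotient.map' (fun x a => g a (x a)) fun _ _ h => h.mono fun a ha => congrArg (g a) ha

noncomputable def mapEmbedding (u : Ultrafilter α) (g : ∀ a, M a ↪[L] N a) :
    (u : Filter α).Product M ↪[L] (u : Filter α).Product N where
  toFun := map u fun a => g a
  inj' := by
    rintro ⟨x⟩ ⟨y⟩ h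
    exact Quotient.sound ((Quotient.exact h).mono fun a ha => (g a).injective ha)
  map_fun' := by
    intro n f x
    obtain ⟨x, rfl⟩ := exists_eq_cast x
    refine (congrArg (map u fun a => g a) (funMap_cast f x)).trans ?_
    refine (congrArg (fun z : ∀ a, N a => (z : (u : Filter α).Product N))
      (funext fun a => (g a).map_fun f _)).trans ?_
    exact (funMap_cast f fun i a => g a (x i a)).symm
  map_rel' := by
    intro n r x
    obtain ⟨x, rfl⟩ := exists_eq_cast x
    exact (relMap_cast r fun i a => g a (x i a)).trans <|
      (eventually_congr (.of_forall fun a => (g a).map_rel r _)).trans (relMap_cast r x).symm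

theorem exists_substructure_realize_of_forall (u : Ultrafilter α) (φ : L.Sentence)
    (h : ∀ a, ∃ S : L.Substructure (M a), Nonempty S ∧ S ⊨ φ) :
    ∃ S : L.Substructure ((u : Filter α).Product M), Nonempty S ∧ S ⊨ φ := by
  choose S hS hSφ using h
  let e := mapEmbedding u fun a => (S a).subtype
  have hφ : (u : Filter α).Product (fun a => S a) ⊨ φ :=
    (sentence_realize φ).2 (.of_forall hSφ)
  exact ⟨e.toHom.range, ⟨e (Classical.arbitrary _), _, rfl⟩,
    (StrongHomClass.realize_sentence e.equivRange φ).1 hφ⟩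

theorem model_of_forall_mem_finset {T : L.Theory} {M : Finset T → Type*}
    [∀ s, L.Structure (M s)] [∀ s, Nonempty (M s)]
    (h : ∀ s, ∀ σ : T, σ ∈ s → M s ⊨ (σ : L.Sentence)) :
    ((Ultrafilter.of atTop : Ultrafilter (Finset T)) : Filter (Finset T)).Product M ⊨ T := by
  refine (Theory.model_iff _).2 fun σ hσ => (sentence_realize σ).2 ?_
  refine Eventually.filter_mono (Ultrafilter.of_le _) (eventually_atTop.2 ⟨{⟨σ, hσ⟩}, ?_⟩)
  exact fun s hs => h s ⟨σ, hσ⟩ (Finset.singleton_subset_iff.1 hs)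

end FirstOrder.Language.Ultraproduct

theorem neg_theta_theory_iff_sentence
    {L : FirstOrder.Language.{u, v}} (φ : L.Sentence) :
    (∃ T : L.Theory,
        ∀ (M : Type (max u v)) [L.Structure M] [Nonempty M],
          M ⊨ T ↔ ¬ ∃ S : L.Substructure M, Nonempty S ∧ S ⊨ φ) ↔
      (∃ ψ : L.Sentence,
        ∀ (M : Type (max u v)) [L.Structure M] [Nonempty M],
          M ⊨ ψ ↔ ¬ ∃ S : L.Substructure M, Nonempty S ∧ S ⊨ φ) := by
  constructor
  · rintro ⟨T, hT⟩
    obtain ⟨s, hs⟩ : ∃ s : Finset T, ∀ (M : Type (max u v)) [L.Structure M] [Nonempty M],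
        (∀ σ ∈ s, M ⊨ σ.1) → ¬ ∃ S : L.Substructure M, Nonempty S ∧ S ⊨ φ := by
      by_contra! h
      choose M _ _ hMs hMφ using h
      exact (hT _).1 (Ultraproduct.model_of_forall_mem_finset hMs)
        (Ultraproduct.exists_substructure_realize_of_forall _ φ hMφ)
    refine ⟨Formula.iInf fun σ : s => σ.1.1, fun M _ _ => ?_⟩
    rw [Sentence.Realize, Formula.realize_iInf]
    exact ⟨fun h => hs M fun σ hσ => h ⟨σ, hσ⟩,
      fun h σ => ((hT M).2 h).realize_of_mem _ σ.1.2⟩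
  · rintro ⟨ψ, hψ⟩
    exact ⟨{ψ}, fun M _ _ => by simpa using hψ M⟩
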